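/- Fix a competence 1/2 < θ < 1 and a weight 0 < w < 1. The decision rule r* defined by r*(T) = 1 if and only if T is a good table is admissible, and it minimizes the loss: L_w(r*) ≤ L_w(r) for every decision rule r satisfying r(x,y,z,t) = r(x,z,y,t) for all tables (in particular, for every admissible rule r). -/

import Mathlib

/-! Write `q = θ/(1−θ) > 1`. A table `(x,y,z,t)` is `q^((y−z)−(x−t))` times as likely under the
negative state as under the positive one, so it is good exactly when accepting the pair
`{(x,y,z,t), (x,z,y,t)}` costs less than rejecting it. A transposition-invariant rule decides each
such pair as a whole, and `ruleStar` takes the cheaper decision on every pair. Each generating step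
of `≤` lowers both exponents in `goodTable`, whence monotonicity. -/

def tsum4 (T : ℕ × ℕ × ℕ × ℕ) : ℕ := T.1 + T.2.1 + T.2.2.1 + T.2.2.2

def tableStep (T S : ℕ × ℕ × ℕ × ℕ) : Prop :=
  (∃ x y z t : ℕ, T = (x, y, z, t + 1) ∧ S = (x, y, z + 1, t)) ∨
  (∃ x y z t : ℕ, T = (x, y, z, t + 1) ∧ S = (x, y + 1, z, t)) ∨
  (∃ x y z t : ℕ, T = (x, y + 1, z, t) ∧ S = (x + 1, y, z, t)) ∨
  (∃ x y z t : ℕ, T = (x, y, z + 1, t) ∧ S = (x + 1, y, z, t))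

def tableLe : ℕ × ℕ × ℕ × ℕ → ℕ × ℕ × ℕ × ℕ → Prop :=
  Relation.ReflTransGen tableStep

def tables (n : ℕ) : Finset (ℕ × ℕ × ℕ × ℕ) :=
  ((Finset.range (n+1)) ×ˢ (Finset.range (n+1)) ×ˢ (Finset.range (n+1)) ×ˢ
    (Finset.range (n+1))).filter (fun T => tsum4 T = n)

noncomputable def mcoef (n : ℕ) (T : ℕ × ℕ × ℕ × ℕ) : ℝ :=
  (n.factorial : ℝ) /
    (T.1.factorial * T.2.1.factorial * T.2.2.1.factorial * T.2.2.2.factorial)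

/-- The loss `L_w(r) = w·ℙ_r(FP) + (1−w)·ℙ_r(FN)`. -/
noncomputable def loss (n : ℕ) (w θ : ℝ) (r : ℕ × ℕ × ℕ × ℕ → Fin 2) : ℝ :=
  w * ∑ T ∈ (tables n).filter (fun T => r T = 1),
        mcoef n T * θ ^ (T.1 + 2*T.2.1 + T.2.2.2) * (1-θ) ^ (T.1 + 2*T.2.2.1 + T.2.2.2)
  + (1-w) * ∑ T ∈ (tables n).filter (fun T => r T = 0),
        mcoef n T * θ ^ (2*T.1 + T.2.1 + T.2.2.1) * (1-θ) ^ (T.2.1 + T.2.2.1 + 2*T.2.2.2)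

/-- A table `(x,y,z,t)` is good (for competence `θ` and weight `w`) if
`(θ/(1−θ))^{(y−z)−(x−t)} + (θ/(1−θ))^{(z−y)−(x−t)} < 2(1−w)/w`. -/
def goodTable (θ w : ℝ) (T : ℕ × ℕ × ℕ × ℕ) : Prop :=
  (θ/(1-θ)) ^ (((T.2.1 : ℤ) - T.2.2.1) - ((T.1 : ℤ) - T.2.2.2))
    + (θ/(1-θ)) ^ (((T.2.2.1 : ℤ) - T.2.1) - ((T.1 : ℤ) - T.2.2.2)) < 2*(1-w)/w

open Classical in
/-- The rule whose positive tables are exactly the good tables. -/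
noncomputable def ruleStar (θ w : ℝ) : ℕ × ℕ × ℕ × ℕ → Fin 2 :=
  fun T => if goodTable θ w T then 1 else 0

lemma one_lt_div_one_sub {θ : ℝ} (hθ : 1/2 < θ) (hθ1 : θ < 1) : 1 < θ / (1 - θ) := by
  rw [lt_div_iff₀ (by linarith)]; linarith

lemma zpow_add_zpow_lt_of_le {K : Type*} [Field K] [LinearOrder K] [IsStrictOrderedRing K]
    {q C : K} (hq : 1 ≤ q) {a b a' b' : ℤ} (ha : a' ≤ a) (hb : b' ≤ b)
    (h : q ^ a + q ^ b < C) : q ^ a' + q ^ b' < C := by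
  have := zpow_le_zpow_right₀ hq ha
  have := zpow_le_zpow_right₀ hq hb
  linarith

lemma goodTable_of_tableStep {θ w : ℝ} (hθ : 1/2 < θ) (hθ1 : θ < 1) {T S : ℕ × ℕ × ℕ × ℕ}
    (h : tableStep T S) (hT : goodTable θ w T) : goodTable θ w S := by
  have hq := (one_lt_div_one_sub hθ hθ1).le
  rcases h with ⟨x, y, z, t, rfl, rfl⟩ | ⟨x, y, z, t, rfl, rfl⟩ | ⟨x, y, z, t, rfl, rfl⟩ |
      ⟨x, y, z, t, rfl, rfl⟩ <;>
    refine zpow_add_zpow_lt_of_le hq ?_ ?_ hT <;> push_cast <;> omega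

lemma goodTable_of_tableLe {θ w : ℝ} (hθ : 1/2 < θ) (hθ1 : θ < 1) {T S : ℕ × ℕ × ℕ × ℕ}
    (h : tableLe T S) (hT : goodTable θ w T) : goodTable θ w S := by
  induction h with
  | refl => exact hT
  | tail _ hstep ih => exact goodTable_of_tableStep hθ hθ1 hstep ih

def tableSwap (T : ℕ × ℕ × ℕ × ℕ) : ℕ × ℕ × ℕ × ℕ := (T.1, T.2.2.1, T.2.1, T.2.2.2)

lemma goodTable_tableSwap (θ w : ℝ) (T : ℕ × ℕ × ℕ × ℕ) :
    goodTable θ w (tableSwap T) ↔ goodTable θ w T := by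
  rw [goodTable, goodTable, add_comm]; rfl

lemma ruleStar_tableSwap (θ w : ℝ) (T : ℕ × ℕ × ℕ × ℕ) :
    ruleStar θ w (tableSwap T) = ruleStar θ w T := by
  rw [ruleStar, ruleStar]
  congr 1
  exact propext (goodTable_tableSwap θ w T)

lemma mem_tables {n : ℕ} {T : ℕ × ℕ × ℕ × ℕ} : T ∈ tables n ↔ tsum4 T = n := by
  obtain ⟨x, y, z, t⟩ := T
  rw [tables, Finset.mem_filter]
  simp only [Finset.mem_product, Finset.mem_range, tsum4]
  omega

lemma tableSwap_mem_tables {n : ℕ} {T : ℕ × ℕ × ℕ × ℕ} (h : T ∈ tables n) :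
    tableSwap T ∈ tables n := by
  obtain ⟨x, y, z, t⟩ := T
  simp only [mem_tables, tsum4, tableSwap] at *
  omega

lemma sum_tables_comp_tableSwap {M : Type*} [AddCommMonoid M] (n : ℕ) (f : ℕ × ℕ × ℕ × ℕ → M) :
    ∑ T ∈ tables n, f (tableSwap T) = ∑ T ∈ tables n, f T :=
  Finset.sum_nbij' tableSwap tableSwap (fun _ => tableSwap_mem_tables)
    (fun _ => tableSwap_mem_tables) (fun _ _ => rfl) (fun _ _ => rfl) (fun _ _ => rfl)

noncomputable def probNeg (n : ℕ) (θ : ℝ) (T : ℕ × ℕ × ℕ × ℕ) : ℝ :=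
  mcoef n T * θ ^ (T.1 + 2*T.2.1 + T.2.2.2) * (1-θ) ^ (T.1 + 2*T.2.2.1 + T.2.2.2)

noncomputable def probPos (n : ℕ) (θ : ℝ) (T : ℕ × ℕ × ℕ × ℕ) : ℝ :=
  mcoef n T * θ ^ (2*T.1 + T.2.1 + T.2.2.1) * (1-θ) ^ (T.2.1 + T.2.2.1 + 2*T.2.2.2)

lemma probPos_pos (n : ℕ) {θ : ℝ} (h0 : 0 < θ) (h1 : θ < 1) (T : ℕ × ℕ × ℕ × ℕ) :
    0 < probPos n θ T := by
  have : 0 < 1 - θ := by linarith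
  unfold probPos mcoef
  positivity

lemma probPos_tableSwap (n : ℕ) (θ : ℝ) (T : ℕ × ℕ × ℕ × ℕ) :
    probPos n θ (tableSwap T) = probPos n θ T := by
  simp only [probPos, mcoef, tableSwap]
  ring_nf

lemma pow_eq_pow_mul_zpow {G₀ : Type*} [GroupWithZero G₀] {a : G₀} (ha : a ≠ 0) {k l : ℕ} {e : ℤ}
    (h : (k : ℤ) = l + e) :
    a ^ k = a ^ l * a ^ e := by
  rw [← zpow_natCast, h, zpow_add₀ ha, zpow_natCast]

lemma probNeg_eq_probPos_mul_zpow (n : ℕ) {θ : ℝ} (h0 : 0 < θ) (h1 : θ < 1) (x y z t : ℕ) :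
    probNeg n θ (x, y, z, t)
      = probPos n θ (x, y, z, t) * (θ/(1-θ)) ^ (((y:ℤ) - z) - ((x:ℤ) - t)) := by
  have h1' : 1 - θ ≠ 0 := by linarith
  rw [probNeg, probPos, div_zpow, div_eq_mul_inv, ← zpow_neg,
    pow_eq_pow_mul_zpow h0.ne' (l := 2*x+y+z) (e := ((y:ℤ) - z) - ((x:ℤ) - t))
      (by push_cast; ring),
    pow_eq_pow_mul_zpow h1' (l := y+z+2*t) (e := -(((y:ℤ) - z) - ((x:ℤ) - t)))
      (by push_cast; ring)]
  ring

lemma goodTable_iff (n : ℕ) {θ w : ℝ} (h0 : 0 < θ) (h1 : θ < 1) (hw : 0 < w)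
    (T : ℕ × ℕ × ℕ × ℕ) :
    goodTable θ w T ↔ w * (probNeg n θ T + probNeg n θ (tableSwap T))
      < (1-w) * (probPos n θ T + probPos n θ (tableSwap T)) := by
  obtain ⟨x, y, z, t⟩ := T
  have hB := probPos_pos n h0 h1 (x, y, z, t)
  have hneg : w * (probNeg n θ (x, y, z, t) + probNeg n θ (tableSwap (x, y, z, t)))
      = ((θ/(1-θ)) ^ (((y:ℤ) - z) - ((x:ℤ) - t)) + (θ/(1-θ)) ^ (((z:ℤ) - y) - ((x:ℤ) - t)))
          * w * probPos n θ (x, y, z, t) := by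
    rw [probNeg_eq_probPos_mul_zpow n h0 h1, tableSwap, probNeg_eq_probPos_mul_zpow n h0 h1,
      ← tableSwap, probPos_tableSwap]
    ring
  rw [hneg, probPos_tableSwap, ← two_mul, ← mul_assoc, mul_lt_mul_iff_of_pos_right hB,
    ← lt_div_iff₀ hw, goodTable, mul_comm 2 (1 - w)]

noncomputable def tableCost (n : ℕ) (w θ : ℝ) (r : ℕ × ℕ × ℕ × ℕ → Fin 2)
    (T : ℕ × ℕ × ℕ × ℕ) : ℝ :=
  if r T = 1 then w * probNeg n θ T else (1-w) * probPos n θ T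

lemma loss_eq_sum_tableCost (n : ℕ) (w θ : ℝ) (r : ℕ × ℕ × ℕ × ℕ → Fin 2) :
    loss n w θ r = ∑ T ∈ tables n, tableCost n w θ r T := by
  rw [loss, Finset.sum_filter, Finset.sum_filter, Finset.mul_sum, Finset.mul_sum,
    ← Finset.sum_add_distrib]
  refine Finset.sum_congr rfl fun T _ => ?_
  by_cases h : r T = 0
  · simp [tableCost, probPos, h]
  · simp [tableCost, probNeg, Fin.eq_one_of_ne_zero _ h]

noncomputable def pairCost (n : ℕ) (w θ : ℝ) (d : Fin 2) (T : ℕ × ℕ × ℕ × ℕ) : ℝ :=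
  if d = 1 then w * (probNeg n θ T + probNeg n θ (tableSwap T))
  else (1-w) * (probPos n θ T + probPos n θ (tableSwap T))

lemma two_mul_loss_eq_sum_pairCost {n : ℕ} {w θ : ℝ} {r : ℕ × ℕ × ℕ × ℕ → Fin 2}
    (hr : ∀ x y z t : ℕ, x + y + z + t = n → r (x, y, z, t) = r (x, z, y, t)) :
    2 * loss n w θ r = ∑ T ∈ tables n, pairCost n w θ (r T) T := by
  rw [two_mul, loss_eq_sum_tableCost]
  nth_rw 2 [← sum_tables_comp_tableSwap]
  rw [← Finset.sum_add_distrib]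
  refine Finset.sum_congr rfl fun T hT => ?_
  obtain ⟨x, y, z, t⟩ := T
  have hswap : r (tableSwap (x, y, z, t)) = r (x, y, z, t) :=
    (hr x y z t (mem_tables.mp hT)).symm
  unfold tableCost pairCost
  rw [hswap]
  split_ifs <;> ring

lemma pairCost_ruleStar_le (n : ℕ) {θ w : ℝ} (h0 : 0 < θ) (h1 : θ < 1) (hw : 0 < w)
    (d : Fin 2) (T : ℕ × ℕ × ℕ × ℕ) :
    pairCost n w θ (ruleStar θ w T) T ≤ pairCost n w θ d T := by
  by_cases hg : goodTable θ w T
  · have := (goodTable_iff n h0 h1 hw T).mp hg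
    fin_cases d <;> simp [pairCost, ruleStar, hg]
    linarith
  · have := not_lt.mp ((goodTable_iff n h0 h1 hw T).not.mp hg)
    fin_cases d <;> simp [pairCost, ruleStar, hg]
    linarith

lemma loss_ruleStar_le {n : ℕ} {θ w : ℝ} (h0 : 0 < θ) (h1 : θ < 1) (hw : 0 < w)
    (r : ℕ × ℕ × ℕ × ℕ → Fin 2)
    (hr : ∀ x y z t : ℕ, x + y + z + t = n → r (x, y, z, t) = r (x, z, y, t)) :
    loss n w θ (ruleStar θ w) ≤ loss n w θ r := by
  have hstar : ∀ x y z t : ℕ, x + y + z + t = n →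
      ruleStar θ w (x, y, z, t) = ruleStar θ w (x, z, y, t) :=
    fun x y z t _ => (ruleStar_tableSwap θ w (x, y, z, t)).symm
  have := Finset.sum_le_sum fun T (_ : T ∈ tables n) => pairCost_ruleStar_le n h0 h1 hw (r T) T
  rw [← two_mul_loss_eq_sum_pairCost hstar, ← two_mul_loss_eq_sum_pairCost hr] at this
  linarith

theorem ruleStar_admissible_and_optimal_general
    (n : ℕ)
    (θ : ℝ) (hθ : 1/2 < θ) (hθ1 : θ < 1)
    (w : ℝ) (hw0 : 0 < w) :
    (∀ x y z t : ℕ, x + y + z + t = n →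
        ruleStar θ w (x, y, z, t) = ruleStar θ w (x, z, y, t)) ∧
    (∀ T S : ℕ × ℕ × ℕ × ℕ, tsum4 T = n → tsum4 S = n → tableLe T S →
        ruleStar θ w T ≤ ruleStar θ w S) ∧
    (∀ r : ℕ × ℕ × ℕ × ℕ → Fin 2,
        (∀ x y z t : ℕ, x + y + z + t = n → r (x, y, z, t) = r (x, z, y, t)) →
        loss n w θ (ruleStar θ w) ≤ loss n w θ r) := by
  have hθ0 : 0 < θ := by linarith
  refine ⟨fun x y z t _ => (ruleStar_tableSwap θ w (x, y, z, t)).symm, ?_,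
    loss_ruleStar_le hθ0 hθ1 hw0⟩
  intro T S _ _ hTS
  by_cases hT : goodTable θ w T
  · simp [ruleStar, hT, goodTable_of_tableLe hθ hθ1 hTS hT]
  · simp [ruleStar, hT]

/-- The rule whose positive set consists exactly of the good tables is admissible
(invariant under transposition and order-preserving), and it minimises the loss `L_w`
among all rules invariant under transposition (in particular among admissible rules). -/
theorem ruleStar_admissible_and_optimal
    (n m : ℕ) (hm : 1 ≤ m) (hn : n = 2 * m + 1)
    (θ : ℝ) (hθ : 1/2 < θ) (hθ1 : θ < 1)
    (w : ℝ) (hw0 : 0 < w) (hw1 : w < 1) :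
    (∀ x y z t : ℕ, x + y + z + t = n →
        ruleStar θ w (x, y, z, t) = ruleStar θ w (x, z, y, t)) ∧
    (∀ T S : ℕ × ℕ × ℕ × ℕ, tsum4 T = n → tsum4 S = n → tableLe T S →
        ruleStar θ w T ≤ ruleStar θ w S) ∧
    (∀ r : ℕ × ℕ × ℕ × ℕ → Fin 2,
        (∀ x y z t : ℕ, x + y + z + t = n → r (x, y, z, t) = r (x, z, y, t)) →
        loss n w θ (ruleStar θ w) ≤ loss n w θ r) :=
  ruleStar_admissible_and_optimal_general n θ hθ hθ1 w hw0
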